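/- arXiv:math/0207051 — 3 statements merged into one kernel-verified Lean document; each statement's English description precedes it below -/
import Mathlib

section
/- If f, g ∈ L¹(ℝ) are nonnegative and have the same 3-deck (almost everywhere), then ĝ(0) = f̂(0) and |ĝ(ξ)| = |f̂(ξ)| for all ξ ∈ ℝ. -/
/-!
Integrating the 3-deck against the character `𝐞 (-(x ξ + y η))` and substituting
`u = t + x`, `v = t + y` splits the triple integral into `f̂(-(ξ + η)) f̂(ξ) f̂(η)`.
For real `f` and `η = -ξ` this is `(∫ f) |f̂(ξ)|²`, since `f̂(0) = ∫ f` and `f̂(-ξ)` is the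
conjugate of `f̂(ξ)`. So equal 3-decks give `(∫ f) |f̂(ξ)|² = (∫ g) |ĝ(ξ)|²` for every `ξ`;
at `ξ = 0` this reads `(∫ f)³ = (∫ g)³`, hence equal masses, which cancel unless they vanish,
and for nonnegative functions of mass zero `|f̂| ≤ ∫ f = 0`.
-/

open MeasureTheory
open scoped FourierTransform ComplexConjugate

noncomputable def threeDeck {𝕜 : Type*} [RCLike 𝕜] (f : ℝ → 𝕜) (p : ℝ × ℝ) : 𝕜 :=
  ∫ t, f t * f (t + p.1) * f (t + p.2)

def diagShear : ℝ × (ℝ × ℝ) ≃ᵐ ℝ × (ℝ × ℝ) where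
  toFun q := (q.1, (q.1 + q.2.1, q.1 + q.2.2))
  invFun q := (q.1, (q.2.1 - q.1, q.2.2 - q.1))
  left_inv q := by simp
  right_inv q := by simp
  measurable_toFun := by dsimp only [Equiv.coe_fn_mk]; fun_prop
  measurable_invFun := by dsimp only [Equiv.coe_fn_symm_mk]; fun_prop

@[simp] lemma diagShear_apply (q : ℝ × (ℝ × ℝ)) :
    diagShear q = (q.1, (q.1 + q.2.1, q.1 + q.2.2)) := rfl

lemma measurePreserving_diagShear : MeasurePreserving diagShear := by
  refine (MeasurePreserving.id volume).skew_product
    (g := fun (t : ℝ) (p : ℝ × ℝ) ↦ (t + p.1, t + p.2)) (by fun_prop) (.of_forall fun t ↦ ?_)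
  exact ((measurePreserving_add_left volume t).prod (measurePreserving_add_left volume t)).map_eq

lemma fourierChar_neg_add_eq_mul (t x y ξ η : ℝ) :
    (𝐞 (-(x * ξ + y * η)) : ℂ) =
      𝐞 (t * (ξ + η)) * 𝐞 (-((t + x) * ξ)) * 𝐞 (-((t + y) * η)) := by
  simp only [← Circle.coe_mul, ← AddChar.map_add_eq_mul]
  congr 2; ring

lemma MeasureTheory.Integrable.fourierChar_smul {E : Type*} [NormedAddCommGroup E]
    [NormedSpace ℂ E] {F : ℝ → E} (hF : Integrable F) (ξ : ℝ) :
    Integrable (fun t ↦ 𝐞 (-(t * ξ)) • F t) :=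
  hF.norm.mono' ((by fun_prop : Continuous fun t : ℝ ↦ 𝐞 (-(t * ξ))).aestronglyMeasurable.smul
    hF.aestronglyMeasurable) (.of_forall fun t ↦ by rw [Circle.norm_smul])

theorem integral_fourierChar_smul_threeDeck {F : ℝ → ℂ} (hF : Integrable F) (ξ η : ℝ) :
    ∫ p : ℝ × ℝ, 𝐞 (-(p.1 * ξ + p.2 * η)) • threeDeck F p =
      𝓕 F (-(ξ + η)) * 𝓕 F ξ * 𝓕 F η := by
  let φ : ℝ → ℝ → ℂ := fun ζ t ↦ 𝐞 (-(t * ζ)) • F t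
  let K : ℝ × (ℝ × ℝ) → ℂ := fun q ↦
    𝐞 (-(q.2.1 * ξ + q.2.2 * η)) • (F q.1 * F (q.1 + q.2.1) * F (q.1 + q.2.2))
  let P : ℝ × (ℝ × ℝ) → ℂ := fun q ↦ φ (-(ξ + η)) q.1 * (φ ξ q.2.1 * φ η q.2.2)
  have hP : Integrable P := by
    have h := (hF.fourierChar_smul (-(ξ + η))).mul_prod
      ((hF.fourierChar_smul ξ).mul_prod (hF.fourierChar_smul η))
    rwa [← Measure.volume_eq_prod, ← Measure.volume_eq_prod] at h
  have hKP : K = P ∘ diagShear := by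
    ext q
    simp only [K, P, φ, diagShear_apply, Function.comp_apply, Circle.smul_def, smul_eq_mul,
      fourierChar_neg_add_eq_mul q.1, mul_neg, neg_neg]
    ring
  have hK : Integrable K := by
    rw [hKP]
    exact (measurePreserving_diagShear.integrable_comp hP.aestronglyMeasurable).2 hP
  calc ∫ p : ℝ × ℝ, 𝐞 (-(p.1 * ξ + p.2 * η)) • threeDeck F p
      = ∫ p : ℝ × ℝ, ∫ t, K (t, p) := by
        simp_rw [threeDeck, K, Circle.smul_def, ← integral_smul]
    _ = ∫ q, K q := by
        rw [← integral_integral_swap (f := fun t p ↦ K (t, p)) hK]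
        exact (integral_prod K hK).symm
    _ = ∫ q, P q := by
        rw [hKP]; exact measurePreserving_diagShear.integral_comp' P
    _ = 𝓕 F (-(ξ + η)) * 𝓕 F ξ * 𝓕 F η := by
        simp only [P]
        rw [Measure.volume_eq_prod,
          integral_prod_mul (φ (-(ξ + η))) (fun y : ℝ × ℝ ↦ φ ξ y.1 * φ η y.2),
          Measure.volume_eq_prod, integral_prod_mul (φ ξ) (φ η), mul_assoc]
        simp only [φ, Real.fourier_real_eq]

lemma threeDeck_ofReal (f : ℝ → ℝ) (p : ℝ × ℝ) :
    threeDeck (fun t ↦ (f t : ℂ)) p = threeDeck f p := by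
  simp only [threeDeck, ← Complex.ofReal_mul]
  exact integral_ofReal

lemma fourier_ofReal_zero (f : ℝ → ℝ) : 𝓕 (fun t ↦ (f t : ℂ)) 0 = ∫ t, f t := by
  simp only [Real.fourier_real_eq, mul_zero, neg_zero, AddChar.map_zero_eq_one, one_smul]
  exact integral_ofReal

lemma fourier_ofReal_neg (f : ℝ → ℝ) (ξ : ℝ) :
    𝓕 (fun t ↦ (f t : ℂ)) (-ξ) = conj (𝓕 (fun t ↦ (f t : ℂ)) ξ) := by
  simp_rw [Real.fourier_real_eq, ← integral_conj, Circle.smul_def, smul_eq_mul, map_mul,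
    Complex.conj_ofReal, ← Circle.coe_inv_eq_conj, ← AddChar.map_neg_eq_inv, mul_neg]

lemma norm_fourier_ofReal_le_integral {f : ℝ → ℝ} (hf0 : ∀ t, 0 ≤ f t) (ξ : ℝ) :
    ‖𝓕 (fun t ↦ (f t : ℂ)) ξ‖ ≤ ∫ t, f t :=
  (VectorFourier.norm_fourierIntegral_le_integral_norm _ _ _ _ _).trans_eq <| by
    simp [Complex.norm_real, abs_of_nonneg (hf0 _)]

theorem integral_fourierChar_smul_threeDeck_ofReal {f : ℝ → ℝ} (hf : Integrable f) (ξ : ℝ) :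
    ∫ p : ℝ × ℝ, 𝐞 (-(p.1 * ξ + p.2 * -ξ)) • ((threeDeck f p : ℝ) : ℂ) =
      ((∫ t, f t) * ‖𝓕 (fun t ↦ (f t : ℂ)) ξ‖ ^ 2 : ℝ) := by
  simp_rw [← threeDeck_ofReal]
  rw [integral_fourierChar_smul_threeDeck (F := fun t ↦ (f t : ℂ)) hf.ofReal, add_neg_cancel,
    neg_zero, fourier_ofReal_zero, fourier_ofReal_neg, mul_assoc, Complex.mul_conj,
    Complex.normSq_eq_norm_sq]
  push_cast
  ring

lemma integral_mul_norm_fourier_sq_eq_of_threeDeck_ae_eq {f g : ℝ → ℝ} (hf : Integrable f)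
    (hg : Integrable g) (hN : threeDeck f =ᵐ[volume] threeDeck g) (ξ : ℝ) :
    (∫ t, f t) * ‖𝓕 (fun t ↦ (f t : ℂ)) ξ‖ ^ 2 = (∫ t, g t) * ‖𝓕 (fun t ↦ (g t : ℂ)) ξ‖ ^ 2 := by
  have hNξ : ∀ᵐ p : ℝ × ℝ, 𝐞 (-(p.1 * ξ + p.2 * -ξ)) • ((threeDeck f p : ℝ) : ℂ) =
      𝐞 (-(p.1 * ξ + p.2 * -ξ)) • ((threeDeck g p : ℝ) : ℂ) := by
    filter_upwards [hN] with p hp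
    rw [hp]
  exact_mod_cast (integral_fourierChar_smul_threeDeck_ofReal hf ξ).symm.trans
    ((integral_congr_ae hNξ).trans (integral_fourierChar_smul_threeDeck_ofReal hg ξ))

/-- if `f, g ∈ L¹(ℝ)` are nonnegative and have the same 3-deck a.e.,
then `ĝ(0) = f̂(0)` and `|ĝ(ξ)| = |f̂(ξ)|` for all `ξ`. -/
theorem same_3deck_same_modulus (f g : ℝ → ℝ)
    (hf : Integrable f) (hg : Integrable g)
    (hf0 : ∀ t, 0 ≤ f t) (hg0 : ∀ t, 0 ≤ g t)
    (hN : ∀ᵐ p : ℝ × ℝ,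
      (∫ t : ℝ, f t * f (t + p.1) * f (t + p.2)) =
      (∫ t : ℝ, g t * g (t + p.1) * g (t + p.2))) :
    𝓕 (fun t => (g t : ℂ)) 0 = 𝓕 (fun t => (f t : ℂ)) 0 ∧
    ∀ ξ : ℝ, ‖𝓕 (fun t => (g t : ℂ)) ξ‖ = ‖𝓕 (fun t => (f t : ℂ)) ξ‖ := by
  have key := integral_mul_norm_fourier_sq_eq_of_threeDeck_ae_eq hf hg hN
  have hmass : ∫ t, f t = ∫ t, g t := by
    have h := key 0
    simp only [fourier_ofReal_zero, Complex.norm_real, Real.norm_eq_abs, sq_abs] at h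
    exact (Odd.pow_inj (n := 3) (by decide)).1 (by linear_combination h)
  refine ⟨by rw [fourier_ofReal_zero, fourier_ofReal_zero, hmass], fun ξ ↦ ?_⟩
  rcases eq_or_ne (∫ t, g t) 0 with hzero | hne
  · have hf' := norm_fourier_ofReal_le_integral hf0 ξ
    have hg' := norm_fourier_ofReal_le_integral hg0 ξ
    rw [hmass, hzero] at hf'
    rw [hzero] at hg'
    rw [le_antisymm hf' (norm_nonneg _), le_antisymm hg' (norm_nonneg _)]
  · rw [← sq_eq_sq₀ (norm_nonneg _) (norm_nonneg _)]
    exact (mul_left_cancel₀ hne (hmass ▸ key ξ)).symm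
end

section
/- Let E ⊂ ℝ be a measurable set of finite measure, f = χ_E, and let g ∈ L¹(ℝ) be nonnegative with the same 3-deck as f (N_g = N_f a.e.). Then there exists a measurable set F of finite measure such that g = χ_F almost everywhere. -/
/-!
Write `M = |E|`, `C_h(x) = ∫ h(t) h(t + x) dt` and `f = χ_E`. Integrating `N_g = N_f` over the
plane gives `(∫ g)³ = M³`, so `∫ g = M`; integrating over one variable then gives `C_g = C_f`
almost everywhere. By AM–GM `C_g ≤ ∫ g²` everywhere, while `C_f(x) = |E ∩ (E - x)| → M` as
`x → 0`; hence `M ≤ ∫ g²`. Testing `N_g = N_f` against `k ⊗ k` for a probability kernel `k`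
gives `∫ g (g ⋆ k)² = ∫ f (f ⋆ k)² ≤ M`; letting `k` shrink to a point, Lebesgue
differentiation and Fatou give `∫ g³ ≤ M`. So `∫ g (g - 1)² = ∫ g³ - 2 ∫ g² + ∫ g ≤ 0`, and
`g ∈ {0, 1}` almost everywhere.
-/

open MeasureTheory Filter Set
open scoped ENNReal Topology

lemma ENNReal.two_mul_le_add_sq (a b : ℝ≥0∞) : 2 * a * b ≤ a ^ 2 + b ^ 2 := by
  induction a using ENNReal.recTopCoe with
  | top => rcases eq_or_ne b 0 with rfl | hb <;> simp [*, ENNReal.top_pow]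
  | coe a =>
    induction b using ENNReal.recTopCoe with
    | top => simp
    | coe b => exact_mod_cast _root_.two_mul_le_add_sq a b

lemma ENNReal.two_mul_sq_le_add_pow_three (a : ℝ≥0∞) : 2 * a ^ 2 ≤ a + a ^ 3 := by
  induction a using ENNReal.recTopCoe with
  | top => simp
  | coe a =>
    suffices 2 * (a : ℝ) ^ 2 ≤ a + a ^ 3 by exact_mod_cast this
    nlinarith [mul_nonneg a.2 (sq_nonneg ((a : ℝ) - 1))]

lemma ENNReal.eq_zero_or_one_of_two_mul_sq_eq {a : ℝ≥0∞} (ha : a ≠ ∞)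
    (h : 2 * a ^ 2 = a + a ^ 3) : a = 0 ∨ a = 1 := by
  lift a to NNReal using ha
  have h' : (a : ℝ) * ((a : ℝ) - 1) ^ 2 = 0 := by
    have : 2 * (a : ℝ) ^ 2 = a + a ^ 3 := by exact_mod_cast h
    linear_combination -this
  rcases mul_eq_zero.mp h' with h0 | h1
  · left; exact_mod_cast h0
  · right; exact_mod_cast sub_eq_zero.mp (pow_eq_zero_iff two_ne_zero |>.mp h1)

lemma ae_eq_zero_or_one_of_lintegral_add_pow_three_le {β : Type*} [MeasurableSpace β]
    {μ : Measure β} {G : β → ℝ≥0∞} (hG : AEMeasurable G μ)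
    (hfin : ∫⁻ t, G t ∂μ + ∫⁻ t, G t ^ 3 ∂μ ≠ ∞)
    (h : ∫⁻ t, G t ∂μ + ∫⁻ t, G t ^ 3 ∂μ ≤ 2 * ∫⁻ t, G t ^ 2 ∂μ) :
    ∀ᵐ t ∂μ, G t = 0 ∨ G t = 1 := by
  have hsum : ∫⁻ t, (G t + G t ^ 3) ∂μ = ∫⁻ t, G t ∂μ + ∫⁻ t, G t ^ 3 ∂μ :=
    lintegral_add_left' hG _
  have hsq : ∫⁻ t, 2 * G t ^ 2 ∂μ = 2 * ∫⁻ t, G t ^ 2 ∂μ := lintegral_const_mul' _ _ (by simp)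
  have hle : ∫⁻ t, 2 * G t ^ 2 ∂μ ≤ ∫⁻ t, (G t + G t ^ 3) ∂μ :=
    lintegral_mono fun t => ENNReal.two_mul_sq_le_add_pow_three (G t)
  have heq : (fun t => 2 * G t ^ 2) =ᵐ[μ] fun t => G t + G t ^ 3 :=
    ae_eq_of_ae_le_of_lintegral_le (ae_of_all _ fun t => ENNReal.two_mul_sq_le_add_pow_three (G t))
      (ne_top_of_le_ne_top (hsum ▸ hfin) hle) (hG.add (hG.pow_const 3)) (hsum ▸ hsq ▸ h)
  have hfinite : ∀ᵐ t ∂μ, G t < ∞ :=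
    ae_lt_top' hG (ne_top_of_le_ne_top hfin le_self_add)
  filter_upwards [heq, hfinite] with t h₁ h₂
  exact ENNReal.eq_zero_or_one_of_two_mul_sq_eq h₂.ne h₁

section Deck

variable {α : Type*} [MeasurableSpace α] [AddCommGroup α] {μ : Measure α} {F G H k : α → ℝ≥0∞}

-- Decks are taken in `ℝ≥0∞`, where Tonelli needs no integrability side conditions.
variable (μ) in
noncomputable def deck3 (H : α → ℝ≥0∞) (x y : α) : ℝ≥0∞ :=
  ∫⁻ t, H t * H (t + x) * H (t + y) ∂μ

variable (μ) in
noncomputable def autocorr (H : α → ℝ≥0∞) (x : α) : ℝ≥0∞ :=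
  ∫⁻ t, H t * H (t + x) ∂μ

variable (μ) in
noncomputable def kernelAverage (H k : α → ℝ≥0∞) (t : α) : ℝ≥0∞ :=
  ∫⁻ x, H (t + x) * k x ∂μ

lemma lintegral_mul_kernelAverage_sq_le (hF : ∀ t, F t ≤ 1) (hk : ∫⁻ x, k x ∂μ = 1) :
    ∫⁻ t, F t * kernelAverage μ F k t ^ 2 ∂μ ≤ ∫⁻ t, F t ∂μ := by
  have hA (t : α) : kernelAverage μ F k t ≤ 1 :=
    (lintegral_mono fun x => by simpa using mul_le_mul_left (hF (t + x)) (k x)).trans_eq hk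
  exact lintegral_mono fun t => mul_le_of_le_one_right' (pow_le_one' (hA t) 2)

variable [MeasurableAdd₂ α]

lemma autocorr_indicator_one {E : Set α} (hE : MeasurableSet E) (x : α) :
    autocorr μ (E.indicator 1) x = μ (E ∩ (· + x) ⁻¹' E) := by
  rw [← lintegral_indicator_one (hE.inter (measurable_add_const x hE))]
  refine lintegral_congr fun t => ?_
  by_cases h₁ : t ∈ E <;> by_cases h₂ : t + x ∈ E <;> simp [h₁, h₂]

section Invariant

variable [μ.IsAddLeftInvariant]

lemma deck3_congr_ae {H' : α → ℝ≥0∞} (h : H =ᵐ[μ] H') (x y : α) :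
    deck3 μ H x y = deck3 μ H' x y := by
  have shift (c : α) : (fun t => H (t + c)) =ᵐ[μ] fun t => H' (t + c) :=
    (measurePreserving_add_right μ c).quasiMeasurePreserving.ae_eq_comp h
  refine lintegral_congr_ae ?_
  filter_upwards [h, shift x, shift y] with t h₀ hx hy
  rw [h₀, hx, hy]

lemma integral_mul_mul_eq_toReal_deck3 {g : α → ℝ} (hg : AEStronglyMeasurable g μ)
    (hg0 : ∀ t, 0 ≤ g t) (x y : α) :
    ∫ t, g t * g (t + x) * g (t + y) ∂μ
      = (deck3 μ (fun t => ENNReal.ofReal (g t)) x y).toReal := by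
  have shift (c : α) : AEStronglyMeasurable (fun t => g (t + c)) μ :=
    hg.comp_measurePreserving (measurePreserving_add_right μ c)
  rw [integral_eq_lintegral_of_nonneg_ae
    (ae_of_all _ fun t => mul_nonneg (mul_nonneg (hg0 t) (hg0 _)) (hg0 _))
    ((hg.mul (shift x)).mul (shift y)), deck3]
  congr 1
  refine lintegral_congr fun t => ?_
  rw [ENNReal.ofReal_mul (mul_nonneg (hg0 t) (hg0 _)), ENNReal.ofReal_mul (hg0 t)]

lemma autocorr_le_lintegral_sq (hH : AEMeasurable H μ) (x : α) :
    autocorr μ H x ≤ ∫⁻ t, H t ^ 2 ∂μ := by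
  have hshift : ∫⁻ t, H (t + x) ^ 2 ∂μ = ∫⁻ t, H t ^ 2 ∂μ :=
    lintegral_add_right_eq_self (fun t => H t ^ 2) x
  have h2 : 2 * autocorr μ H x ≤ 2 * ∫⁻ t, H t ^ 2 ∂μ := calc
    2 * autocorr μ H x = ∫⁻ t, 2 * H t * H (t + x) ∂μ := by
      rw [autocorr, ← lintegral_const_mul' _ _ (by simp)]
      simp only [mul_assoc]
    _ ≤ ∫⁻ t, (H t ^ 2 + H (t + x) ^ 2) ∂μ :=
      lintegral_mono fun t => ENNReal.two_mul_le_add_sq _ _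
    _ = 2 * ∫⁻ t, H t ^ 2 ∂μ := by
      rw [lintegral_add_left' (hH.pow_const 2), hshift, two_mul]
  exact (ENNReal.mul_le_mul_iff_right (by norm_num) (by norm_num)).mp h2

end Invariant

variable [SFinite μ]

lemma measurable_deck3 (hH : Measurable H) :
    Measurable fun p : α × α => deck3 μ H p.1 p.2 :=
  Measurable.lintegral_prod_right'
    (f := fun q : (α × α) × α => H q.2 * H (q.2 + q.1.1) * H (q.2 + q.1.2)) (by fun_prop)

lemma measurable_kernelAverage (hH : Measurable H) (hk : Measurable k) :
    Measurable (kernelAverage μ H k) :=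
  Measurable.lintegral_prod_right' (f := fun q : α × α => H (q.1 + q.2) * k q.2) (by fun_prop)

lemma lintegral_deck3_mul_mul (hH : Measurable H) (hk : Measurable k) :
    ∫⁻ p, deck3 μ H p.1 p.2 * (k p.1 * k p.2) ∂μ.prod μ
      = ∫⁻ t, H t * kernelAverage μ H k t ^ 2 ∂μ := by
  calc ∫⁻ p, deck3 μ H p.1 p.2 * (k p.1 * k p.2) ∂μ.prod μ
      = ∫⁻ p, ∫⁻ t, H t * (H (t + p.1) * k p.1) * (H (t + p.2) * k p.2) ∂μ ∂μ.prod μ := by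
        refine lintegral_congr fun p => ?_
        rw [deck3, ← lintegral_mul_const _ (by fun_prop)]
        congr 1 with t
        ring
    _ = ∫⁻ t, ∫⁻ p, H t * (H (t + p.1) * k p.1) * (H (t + p.2) * k p.2) ∂μ.prod μ ∂μ :=
        lintegral_lintegral_swap (by fun_prop)
    _ = ∫⁻ t, H t * kernelAverage μ H k t ^ 2 ∂μ := by
        refine lintegral_congr fun t => ?_
        rw [lintegral_prod_mul (f := fun x => H t * (H (t + x) * k x))
            (g := fun y => H (t + y) * k y) (by fun_prop) (by fun_prop),
          lintegral_const_mul _ (by fun_prop), kernelAverage, mul_assoc, sq]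

variable [μ.IsAddLeftInvariant]

lemma lintegral_deck3 (hH : Measurable H) :
    ∫⁻ p, deck3 μ H p.1 p.2 ∂μ.prod μ = (∫⁻ t, H t ∂μ) ^ 3 := by
  have hconst (t : α) : kernelAverage μ H 1 t = ∫⁻ t, H t ∂μ := by
    simp only [kernelAverage, Pi.one_apply, mul_one]
    exact lintegral_add_left_eq_self H t
  have h := lintegral_deck3_mul_mul (μ := μ) hH measurable_one
  simp only [Pi.one_apply, mul_one, hconst] at h
  rw [h, lintegral_mul_const _ hH]
  ring

lemma lintegral_deck3_right (hH : Measurable H) (x : α) :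
    ∫⁻ y, deck3 μ H x y ∂μ = autocorr μ H x * ∫⁻ t, H t ∂μ := by
  unfold deck3 autocorr
  rw [lintegral_lintegral_swap (by fun_prop),
    ← lintegral_mul_const _ (by fun_prop)]
  refine lintegral_congr fun t => ?_
  rw [lintegral_const_mul _ (by fun_prop), lintegral_add_left_eq_self H t]

lemma lintegral_eq_of_deck3_ae_eq (hG : Measurable G) (hH : Measurable H)
    (h : ∀ᵐ p ∂μ.prod μ, deck3 μ G p.1 p.2 = deck3 μ H p.1 p.2) :
    ∫⁻ t, G t ∂μ = ∫⁻ t, H t ∂μ := by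
  refine (ENNReal.pow_right_strictMono three_ne_zero).injective ?_
  simp only [← lintegral_deck3 hG, ← lintegral_deck3 hH]
  exact lintegral_congr_ae h

lemma autocorr_ae_eq_of_deck3_ae_eq (hG : Measurable G) (hH : Measurable H)
    (h : ∀ᵐ p ∂μ.prod μ, deck3 μ G p.1 p.2 = deck3 μ H p.1 p.2)
    (h₀ : ∫⁻ t, H t ∂μ ≠ 0) (htop : ∫⁻ t, H t ∂μ ≠ ∞) :
    ∀ᵐ x ∂μ, autocorr μ G x = autocorr μ H x := by
  filter_upwards [Measure.ae_ae_of_ae_prod h] with x hx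
  have hsum := lintegral_congr_ae hx
  rw [lintegral_deck3_right hG, lintegral_deck3_right hH,
    lintegral_eq_of_deck3_ae_eq hG hH h] at hsum
  exact (ENNReal.mul_left_inj h₀ htop).mp hsum

lemma ae_deck3_lt_top (hH : AEMeasurable H μ) (hfin : ∫⁻ t, H t ∂μ ≠ ∞) :
    ∀ᵐ p ∂μ.prod μ, deck3 μ H p.1 p.2 < ∞ := by
  obtain ⟨H', hH'm, hHH'⟩ := hH
  simp only [deck3_congr_ae hHH']
  rw [lintegral_congr_ae hHH'] at hfin
  refine ae_lt_top (measurable_deck3 hH'm) ?_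
  rw [lintegral_deck3 hH'm]
  exact ENNReal.pow_ne_top hfin

lemma ae_deck3_ofReal_eq_of_integral_eq {g₁ g₂ : α → ℝ} (hg₁ : Integrable g₁ μ)
    (hg₂ : Integrable g₂ μ) (hg₁0 : ∀ t, 0 ≤ g₁ t) (hg₂0 : ∀ t, 0 ≤ g₂ t)
    (h : ∀ᵐ p ∂μ.prod μ, ∫ t, g₁ t * g₁ (t + p.1) * g₁ (t + p.2) ∂μ
      = ∫ t, g₂ t * g₂ (t + p.1) * g₂ (t + p.2) ∂μ) :
    ∀ᵐ p ∂μ.prod μ, deck3 μ (fun t => ENNReal.ofReal (g₁ t)) p.1 p.2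
      = deck3 μ (fun t => ENNReal.ofReal (g₂ t)) p.1 p.2 := by
  filter_upwards [h, ae_deck3_lt_top hg₁.1.aemeasurable.ennreal_ofReal hg₁.lintegral_lt_top.ne,
    ae_deck3_lt_top hg₂.1.aemeasurable.ennreal_ofReal hg₂.lintegral_lt_top.ne] with p hp h₁ h₂
  rw [integral_mul_mul_eq_toReal_deck3 hg₁.1 hg₁0,
    integral_mul_mul_eq_toReal_deck3 hg₂.1 hg₂0] at hp
  exact (ENNReal.toReal_eq_toReal_iff' h₁.ne h₂.ne).mp hp

end Deck

lemma tendsto_volume_diff_preimage_add_nhds_zero {E : Set ℝ} (hE : MeasurableSet E)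
    (hfin : volume E ≠ ∞) :
    Tendsto (fun x : ℝ => volume (E \ (· + x) ⁻¹' E)) (𝓝 0) (𝓝 0) := by
  let T : C(ℝ × ℝ, ℝ) := ⟨fun p => p.2 + p.1, by fun_prop⟩
  have hsymm := tendsto_measure_symmDiff_preimage_nhds_zero (μ := volume) (ν := volume)
    (T.curry.continuous.tendsto 0)
    (Eventually.of_forall fun x => measurePreserving_add_right volume x)
    (measurePreserving_add_right volume 0) hE.nullMeasurableSet hfin
  refine tendsto_of_tendsto_of_tendsto_of_le_of_le tendsto_const_nhds hsymm (fun _ => zero_le)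
    fun x => measure_mono fun t ht => Or.inr ⟨?_, ht.2⟩
  simpa [T] using ht.1

lemma volume_le_lintegral_sq_of_autocorr_ae_eq {E : Set ℝ} (hE : MeasurableSet E)
    (hfin : volume E ≠ ∞) {G : ℝ → ℝ≥0∞} (hG : AEMeasurable G)
    (h : ∀ᵐ x, autocorr volume G x = autocorr volume (E.indicator 1) x) :
    volume E ≤ ∫⁻ t, G t ^ 2 := by
  -- The autocorrelations agree only a.e., so `x → 0` is taken inside the (dense) set where they do.
  set S := {x | autocorr volume G x = autocorr volume (E.indicator 1) x}
  have : (𝓝[S] (0 : ℝ)).NeBot :=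
    mem_closure_iff_nhdsWithin_neBot.mp ((Measure.dense_of_ae h).closure_eq ▸ mem_univ 0)
  have hlim := ((tendsto_volume_diff_preimage_add_nhds_zero hE hfin).mono_left
    (nhdsWithin_le_nhds (s := S))).const_add (∫⁻ t, G t ^ 2)
  rw [add_zero] at hlim
  refine ge_of_tendsto hlim ?_
  filter_upwards [self_mem_nhdsWithin] with x hx
  calc volume E = volume (E ∩ (· + x) ⁻¹' E) + volume (E \ (· + x) ⁻¹' E) :=
        (measure_inter_add_sdiff E (measurable_add_const x hE)).symm
    _ = autocorr volume G x + volume (E \ (· + x) ⁻¹' E) := by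
        rw [hx, autocorr_indicator_one hE]
    _ ≤ _ := by gcongr; exact autocorr_le_lintegral_sq hG x

noncomputable def boxKernel (ε : ℝ) : ℝ → ℝ≥0∞ :=
  (Metric.closedBall 0 ε).indicator fun _ => (volume (Metric.closedBall (0 : ℝ) ε))⁻¹

lemma measurable_boxKernel (ε : ℝ) : Measurable (boxKernel ε) :=
  measurable_const.indicator measurableSet_closedBall

lemma lintegral_boxKernel {ε : ℝ} (hε : 0 < ε) : ∫⁻ x, boxKernel ε x = 1 := by
  rw [boxKernel, lintegral_indicator measurableSet_closedBall, setLIntegral_const,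
    ENNReal.inv_mul_cancel (Metric.measure_closedBall_pos volume 0 hε).ne'
      measure_closedBall_lt_top.ne]

lemma kernelAverage_boxKernel (G : ℝ → ℝ≥0∞) {ε : ℝ} (hε : 0 < ε) (t : ℝ) :
    kernelAverage volume G (boxKernel ε) t
      = (∫⁻ y in Metric.closedBall t ε, G y) / volume (Metric.closedBall t ε) := by
  have hpre : (t + ·) ⁻¹' Metric.closedBall t ε = Metric.closedBall 0 ε := by
    simp [preimage_add_closedBall]
  have hc : (volume (Metric.closedBall (0 : ℝ) ε))⁻¹ ≠ ∞ :=
    ENNReal.inv_ne_top.2 (Metric.measure_closedBall_pos volume 0 hε).ne'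
  calc kernelAverage volume G (boxKernel ε) t
      = ∫⁻ x in Metric.closedBall 0 ε, G (t + x) * (volume (Metric.closedBall (0 : ℝ) ε))⁻¹ := by
        rw [kernelAverage, ← lintegral_indicator measurableSet_closedBall]
        refine lintegral_congr fun x => ?_
        by_cases hx : x ∈ Metric.closedBall 0 ε <;> simp [boxKernel, hx]
    _ = (∫⁻ y in Metric.closedBall t ε, G y) * (volume (Metric.closedBall (0 : ℝ) ε))⁻¹ := by
        rw [lintegral_mul_const' _ _ hc, ← hpre, (measurePreserving_add_left volume t)
          |>.setLIntegral_comp_preimage_emb (measurableEmbedding_addLeft t)]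
    _ = _ := by rw [div_eq_mul_inv, Measure.addHaar_closedBall_center volume t]

lemma ae_tendsto_kernelAverage_boxKernel {G : ℝ → ℝ≥0∞} (hG : AEMeasurable G)
    (hfin : ∫⁻ t, G t ≠ ∞) :
    ∀ᵐ t, Tendsto (fun ε => kernelAverage volume G (boxKernel ε) t) (𝓝[>] 0) (𝓝 (G t)) := by
  filter_upwards [(IsUnifLocDoublingMeasure.vitaliFamily volume 1).ae_tendsto_lintegral_div hG hfin]
    with t ht
  refine Tendsto.congr' (eventually_nhdsWithin_of_forall fun ε hε =>
    (kernelAverage_boxKernel G hε t).symm) (ht.comp ?_)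
  refine (IsUnifLocDoublingMeasure.tendsto_closedBall_filterAt volume (fun _ => t) id
    tendsto_id (eventually_nhdsWithin_of_forall fun ε hε => ?_))
  simpa using le_of_lt hε

lemma lintegral_pow_three_le_of_deck3_ae_eq {G F : ℝ → ℝ≥0∞} (hG : Measurable G)
    (hfin : ∫⁻ t, G t ≠ ∞) (hF : Measurable F) (hF1 : ∀ t, F t ≤ 1)
    (h : ∀ᵐ p ∂volume.prod volume, deck3 volume G p.1 p.2 = deck3 volume F p.1 p.2) :
    ∫⁻ t, G t ^ 3 ≤ ∫⁻ t, F t := by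
  have hbound (ε : ℝ) (hε : 0 < ε) :
      ∫⁻ t, G t * kernelAverage volume G (boxKernel ε) t ^ 2 ≤ ∫⁻ t, F t := calc
    _ = ∫⁻ p, deck3 volume G p.1 p.2 * (boxKernel ε p.1 * boxKernel ε p.2) ∂volume.prod volume :=
        (lintegral_deck3_mul_mul hG (measurable_boxKernel ε)).symm
    _ = ∫⁻ p, deck3 volume F p.1 p.2 * (boxKernel ε p.1 * boxKernel ε p.2) ∂volume.prod volume :=
        lintegral_congr_ae (h.mono fun p hp => by simp only [hp])
    _ = ∫⁻ t, F t * kernelAverage volume F (boxKernel ε) t ^ 2 :=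
        lintegral_deck3_mul_mul hF (measurable_boxKernel ε)
    _ ≤ ∫⁻ t, F t := lintegral_mul_kernelAverage_sq_le hF1 (lintegral_boxKernel hε)
  have hlim : ∀ᵐ t, Tendsto (fun ε => G t * kernelAverage volume G (boxKernel ε) t ^ 2)
      (𝓝[>] 0) (𝓝 (G t ^ 3)) := by
    filter_upwards [ae_tendsto_kernelAverage_boxKernel hG.aemeasurable hfin] with t ht
    rw [pow_succ']
    refine ENNReal.Tendsto.const_mul (ENNReal.Tendsto.pow ht) ?_
    rcases eq_or_ne (G t) ∞ with h | h <;> simp [h]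
  calc ∫⁻ t, G t ^ 3
      = ∫⁻ t, liminf (fun ε => G t * kernelAverage volume G (boxKernel ε) t ^ 2) (𝓝[>] 0) :=
        lintegral_congr_ae (hlim.mono fun t ht => ht.liminf_eq.symm)
    _ ≤ liminf (fun ε => ∫⁻ t, G t * kernelAverage volume G (boxKernel ε) t ^ 2) (𝓝[>] 0) :=
        lintegral_liminf_le fun ε =>
          hG.mul ((measurable_kernelAverage hG (measurable_boxKernel ε)).pow_const 2)
    _ ≤ ∫⁻ t, F t :=
        liminf_le_of_frequently_le' (eventually_nhdsWithin_of_forall (s := Ioi 0) hbound).frequently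

theorem ae_eq_zero_or_one_of_deck3_ae_eq_indicator {E : Set ℝ} (hE : MeasurableSet E)
    (hEfin : volume E ≠ ∞) {G : ℝ → ℝ≥0∞} (hG : Measurable G)
    (h : ∀ᵐ p ∂volume.prod volume, deck3 volume G p.1 p.2 = deck3 volume (E.indicator 1) p.1 p.2) :
    ∀ᵐ t, G t = 0 ∨ G t = 1 := by
  have hF : Measurable (E.indicator (1 : ℝ → ℝ≥0∞)) := measurable_one.indicator hE
  have hF1 (t : ℝ) : E.indicator (1 : ℝ → ℝ≥0∞) t ≤ 1 := indicator_le_self' (fun _ _ => zero_le) t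
  have hmass : ∫⁻ t, G t = volume E :=
    (lintegral_eq_of_deck3_ae_eq hG hF h).trans (lintegral_indicator_one hE)
  have hsq : volume E ≤ ∫⁻ t, G t ^ 2 := by
    rcases eq_or_ne (volume E) 0 with h₀ | h₀
    · simp [h₀]
    refine volume_le_lintegral_sq_of_autocorr_ae_eq hE hEfin hG.aemeasurable ?_
    exact autocorr_ae_eq_of_deck3_ae_eq hG hF h (by rwa [lintegral_indicator_one hE])
      (by rwa [lintegral_indicator_one hE])
  have hcube : ∫⁻ t, G t ^ 3 ≤ volume E :=
    (lintegral_pow_three_le_of_deck3_ae_eq hG (hmass ▸ hEfin) hF hF1 h).trans_eq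
      (lintegral_indicator_one hE)
  refine ae_eq_zero_or_one_of_lintegral_add_pow_three_le hG.aemeasurable ?_ ?_
  · rw [hmass]
    exact ENNReal.add_ne_top.2 ⟨hEfin, ne_top_of_le_ne_top hEfin hcube⟩
  · calc (∫⁻ t, G t) + ∫⁻ t, G t ^ 3 ≤ volume E + volume E := by rw [hmass]; gcongr
      _ = 2 * volume E := (two_mul _).symm
      _ ≤ 2 * ∫⁻ t, G t ^ 2 := by gcongr

/-- if a nonnegative integrable `g` has the same 3-deck as the
indicator of a set `E` of finite measure, then `g` is a.e. equal to the
indicator of some measurable set `F` of finite measure. -/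
theorem same_3deck_as_set_is_set (E : Set ℝ) (hE : MeasurableSet E)
    (hEfin : volume E < ⊤) (g : ℝ → ℝ) (hg : Integrable g) (hg0 : ∀ t, 0 ≤ g t)
    (hN : ∀ᵐ p : ℝ × ℝ,
      (∫ t : ℝ, E.indicator (fun _ => (1 : ℝ)) t *
        E.indicator (fun _ => (1 : ℝ)) (t + p.1) *
        E.indicator (fun _ => (1 : ℝ)) (t + p.2)) =
      (∫ t : ℝ, g t * g (t + p.1) * g (t + p.2))) :
    ∃ F : Set ℝ, MeasurableSet F ∧ volume F < ⊤ ∧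
      ∀ᵐ x : ℝ, g x = F.indicator (fun _ => (1 : ℝ)) x := by
  obtain ⟨G, hGm, hGeq⟩ := hg.1.aemeasurable.ennreal_ofReal
  have hf : Integrable (E.indicator fun _ => (1 : ℝ)) :=
    (integrable_indicator_iff hE).2 (integrableOn_const hEfin.ne)
  have hofReal : (fun t => ENNReal.ofReal (E.indicator (fun _ => (1 : ℝ)) t)) = E.indicator 1 := by
    ext t; by_cases ht : t ∈ E <;> simp [ht]
  have hdeck : ∀ᵐ p ∂volume.prod volume,
      deck3 volume G p.1 p.2 = deck3 volume (E.indicator 1) p.1 p.2 := by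
    have h := ae_deck3_ofReal_eq_of_integral_eq hg hf hg0 (indicator_nonneg (by simp))
      ((Measure.volume_eq_prod ℝ ℝ ▸ hN).mono fun p hp => hp.symm)
    simpa only [deck3_congr_ae hGeq, hofReal] using h
  have hFm : MeasurableSet {t | G t = 1} := hGm (measurableSet_singleton 1)
  have hgF : g =ᵐ[volume] {t | G t = 1}.indicator fun _ => 1 := by
    filter_upwards [ae_eq_zero_or_one_of_deck3_ae_eq_indicator hE hEfin.ne hGm hdeck,
      hGeq] with t ht hGt
    have hgt : g t = (G t).toReal := by rw [← hGt, ENNReal.toReal_ofReal (hg0 t)]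
    rcases ht with h | h <;> simp [hgt, h]
  have hint := hg.congr hgF
  rw [integrable_indicator_iff hFm] at hint
  exact ⟨_, hFm, ((integrableOn_const_iff (C := (1 : ℝ))).mp hint).resolve_left (by simp), hgF⟩
end

section
/- Let f be a nonnegative integrable function on ℝ. Then lim inf as (x,y) → (0,0) of N_f(x,y) = ∫ f(t) f(t−x) f(t−y) dt is at least ∫ f³ dt, and combined with the upper bound N_f(x,y) ≤ ∫ f³ dt, one has lim_{(x,y)→(0,0)} N_f(x,y) = ∫_ℝ f(t)³ dt (where both sides may be +∞). -/
open MeasureTheory Filter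
open scoped ENNReal Topology

/-!
Write `N_f(x, y) = tripleCorrelation μ f x y`. The bound `N_f(x, y) ≤ ∫ f³` is the pointwise
AM–GM inequality `3abc ≤ a³ + b³ + c³` integrated against a translation-invariant measure; it
gives `limsup N_f ≤ ∫ f³` at the origin. For the `liminf`, first let `0 ≤ f ≤ M`. Then
`|f(t) f(t-x) f(t-y) - f(t)³| ≤ M² (|f(t-x) - f(t)| + |f(t-y) - f(t)|)`, whose integral
tends to `0` by continuity of translation in `L¹`. A general `f` is the increasing limit of its
truncations `min f n`; `N_f` is monotone in `f`, and `∫ (min f n)³ ↑ ∫ f³` by monotone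
convergence.
-/

section Inequalities

variable {R : Type*} [CommRing R] [LinearOrder R] [IsStrictOrderedRing R]

theorem three_mul_mul_le_add_pow_three {a b c : R} (ha : 0 ≤ a) (hb : 0 ≤ b) (hc : 0 ≤ c) :
    3 * (a * b * c) ≤ a ^ 3 + b ^ 3 + c ^ 3 := by
  have hs : 0 ≤ a + b + c := by positivity
  nlinarith [mul_nonneg hs (sq_nonneg (a - b)), mul_nonneg hs (sq_nonneg (b - c)),
    mul_nonneg hs (sq_nonneg (a - c))]

theorem abs_mul_mul_sub_pow_three_le {a b c M : R} (ha : 0 ≤ a) (hc : 0 ≤ c) (haM : a ≤ M)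
    (hcM : c ≤ M) : |a * b * c - a ^ 3| ≤ M ^ 2 * (|b - a| + |c - a|) := by
  have hac : a * c ≤ M ^ 2 := by nlinarith
  have haa : a ^ 2 ≤ M ^ 2 := pow_le_pow_left₀ ha haM 2
  calc |a * b * c - a ^ 3| = |a * c * (b - a) + a ^ 2 * (c - a)| := by ring_nf
    _ ≤ a * c * |b - a| + a ^ 2 * |c - a| := by
      refine (abs_add_le _ _).trans_eq ?_
      rw [abs_mul (a * c), abs_mul (a ^ 2), abs_of_nonneg (mul_nonneg ha hc),
        abs_of_nonneg (sq_nonneg a)]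
    _ ≤ M ^ 2 * |b - a| + M ^ 2 * |c - a| := by gcongr
    _ = M ^ 2 * (|b - a| + |c - a|) := by ring

end Inequalities

theorem lintegral_ofReal_pow_eq_iSup_min {α : Type*} [MeasurableSpace α] {μ : Measure α}
    {f : α → ℝ} (hf : AEMeasurable f μ) (hf0 : ∀ t, 0 ≤ f t) (k : ℕ) :
    ∫⁻ t, ENNReal.ofReal (f t ^ k) ∂μ =
      ⨆ n : ℕ, ∫⁻ t, ENNReal.ofReal (min (f t) n ^ k) ∂μ := by
  have hmin0 (n : ℕ) (t : α) : 0 ≤ min (f t) n := le_min (hf0 t) n.cast_nonneg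
  rw [← lintegral_iSup' (fun n => ((hf.min aemeasurable_const).pow_const k).ennreal_ofReal)
    (ae_of_all _ fun t n m hnm => ENNReal.ofReal_le_ofReal <|
      pow_le_pow_left₀ (hmin0 n t) (min_le_min_left _ (Nat.cast_le.2 hnm)) k)]
  congr 1 with t
  refine le_antisymm (le_iSup_of_le ⌈f t⌉₊ ?_) (iSup_le fun n => ?_)
  · rw [min_eq_left (Nat.le_ceil _)]
  · exact ENNReal.ofReal_le_ofReal (pow_le_pow_left₀ (hmin0 n t) (min_le_left _ _) k)

section TripleCorrelation

variable {G : Type*} [AddGroup G] [MeasurableSpace G] {μ : Measure G} {f g : G → ℝ}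

noncomputable def tripleCorrelation (μ : Measure G) (f : G → ℝ) (x y : G) : ℝ≥0∞ :=
  ∫⁻ t, ENNReal.ofReal (f t * f (t - x) * f (t - y)) ∂μ

theorem tripleCorrelation_mono (hg0 : ∀ t, 0 ≤ g t) (hgf : ∀ t, g t ≤ f t) (x y : G) :
    tripleCorrelation μ g x y ≤ tripleCorrelation μ f x y := by
  have hf0 (t : G) : 0 ≤ f t := (hg0 t).trans (hgf t)
  refine lintegral_mono fun t => ENNReal.ofReal_le_ofReal ?_
  exact mul_le_mul (mul_le_mul (hgf _) (hgf _) (hg0 _) (hf0 _)) (hgf _) (hg0 _)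
    (mul_nonneg (hf0 _) (hf0 _))

variable [MeasurableAdd G] [μ.IsAddRightInvariant]

theorem AEMeasurable.comp_sub_right {β : Type*} [MeasurableSpace β] {h : G → β}
    (hh : AEMeasurable h μ) (x : G) : AEMeasurable (fun t => h (t - x)) μ :=
  hh.comp_quasiMeasurePreserving (measurePreserving_sub_right μ x).quasiMeasurePreserving

theorem tripleCorrelation_le_lintegral_ofReal_pow_three (hf : AEMeasurable f μ)
    (hf0 : ∀ t, 0 ≤ f t) (x y : G) :
    tripleCorrelation μ f x y ≤ ∫⁻ t, ENNReal.ofReal (f t ^ 3) ∂μ := by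
  set F : G → ℝ≥0∞ := fun t => ENNReal.ofReal (f t ^ 3)
  have hF : AEMeasurable F μ := (hf.pow_const 3).ennreal_ofReal
  have hpoint (t : G) :
      3 * ENNReal.ofReal (f t * f (t - x) * f (t - y)) ≤ F t + F (t - x) + F (t - y) := by
    have hf3 (s : G) : 0 ≤ f s ^ 3 := pow_nonneg (hf0 s) 3
    rw [← ENNReal.ofReal_ofNat 3, ← ENNReal.ofReal_mul zero_le_three,
      ← ENNReal.ofReal_add (hf3 _) (hf3 _),
      ← ENNReal.ofReal_add (add_nonneg (hf3 _) (hf3 _)) (hf3 _)]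
    exact ENNReal.ofReal_le_ofReal (three_mul_mul_le_add_pow_three (hf0 _) (hf0 _) (hf0 _))
  rw [← ENNReal.mul_le_mul_iff_right three_ne_zero ENNReal.ofNat_ne_top, tripleCorrelation,
    ← lintegral_const_mul' _ _ ENNReal.ofNat_ne_top]
  calc ∫⁻ t, 3 * ENNReal.ofReal (f t * f (t - x) * f (t - y)) ∂μ
      ≤ ∫⁻ t, (F t + F (t - x) + F (t - y)) ∂μ := lintegral_mono hpoint
    _ = 3 * ∫⁻ t, F t ∂μ := by
      rw [lintegral_add_right' _ (hF.comp_sub_right y),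
        lintegral_add_right' _ (hF.comp_sub_right x),
        lintegral_sub_right_eq_self, lintegral_sub_right_eq_self]
      ring

theorem lintegral_ofReal_pow_three_le_tripleCorrelation_add {M : ℝ} (hg : AEMeasurable g μ)
    (hg0 : ∀ t, 0 ≤ g t) (hgM : ∀ t, g t ≤ M) (x y : G) :
    ∫⁻ t, ENNReal.ofReal (g t ^ 3) ∂μ ≤ tripleCorrelation μ g x y + ENNReal.ofReal (M ^ 2) *
      (eLpNorm (fun t => g (t - x) - g t) 1 μ + eLpNorm (fun t => g (t - y) - g t) 1 μ) := by
  have hpoint (t : G) : ENNReal.ofReal (g t ^ 3) ≤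
      ENNReal.ofReal (g t * g (t - x) * g (t - y)) +
        ENNReal.ofReal (M ^ 2) * (‖g (t - x) - g t‖ₑ + ‖g (t - y) - g t‖ₑ) := by
    have h := abs_mul_mul_sub_pow_three_le (b := g (t - x)) (hg0 t) (hg0 (t - y)) (hgM t)
      (hgM _)
    rw [Real.enorm_eq_ofReal_abs, Real.enorm_eq_ofReal_abs,
      ← ENNReal.ofReal_add (abs_nonneg _) (abs_nonneg _), ← ENNReal.ofReal_mul (sq_nonneg M)]
    refine (ENNReal.ofReal_le_ofReal ?_).trans ENNReal.ofReal_add_le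
    linarith [neg_abs_le (g t * g (t - x) * g (t - y) - g t ^ 3)]
  have hprod : AEMeasurable (fun t => ENNReal.ofReal (g t * g (t - x) * g (t - y))) μ :=
    ((hg.mul (hg.comp_sub_right x)).mul (hg.comp_sub_right y)).ennreal_ofReal
  calc ∫⁻ t, ENNReal.ofReal (g t ^ 3) ∂μ
      ≤ ∫⁻ t, (ENNReal.ofReal (g t * g (t - x) * g (t - y)) +
          ENNReal.ofReal (M ^ 2) * (‖g (t - x) - g t‖ₑ + ‖g (t - y) - g t‖ₑ)) ∂μ :=
        lintegral_mono hpoint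
    _ = _ := by
      rw [lintegral_add_left' hprod, lintegral_const_mul' _ _ ENNReal.ofReal_ne_top,
        lintegral_add_left' (f := fun t => ‖g (t - x) - g t‖ₑ)
          ((hg.comp_sub_right x).sub hg).enorm,
        eLpNorm_one_eq_lintegral_enorm, eLpNorm_one_eq_lintegral_enorm, tripleCorrelation]

end TripleCorrelation

section LowerBound

variable {G : Type*} [AddGroup G] [TopologicalSpace G] [IsTopologicalAddGroup G]
  [MeasurableSpace G] [BorelSpace G] {μ : Measure G} [μ.IsAddRightInvariant]
  [IsLocallyFiniteMeasure μ] [μ.InnerRegularCompactLTTop] {f g : G → ℝ}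

theorem tendsto_eLpNorm_comp_sub_sub_self {E : Type*} [NormedAddCommGroup E] {p : ℝ≥0∞}
    [Fact (1 ≤ p)] (hp : p ≠ ∞) {g : G → E} (hg : MemLp g p μ) :
    Tendsto (fun x => eLpNorm (fun t => g (t - x) - g t) p μ) (𝓝 0) (𝓝 0) := by
  let shift (x : G) : C(G, G) := ⟨(· - x), continuous_sub_right x⟩
  have hshift : Continuous shift :=
    ContinuousMap.continuous_of_continuous_uncurry _ (continuous_snd.sub continuous_fst)
  have hmp (x : G) : MeasurePreserving (shift x) μ μ := measurePreserving_sub_right μ x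
  let translate (x : G) : Lp E p μ := Lp.compMeasurePreserving (shift x) (hmp x) (hg.toLp g)
  have hcoe (x : G) : translate x =ᵐ[μ] fun t => g (t - x) :=
    (Lp.coeFn_compMeasurePreserving _ (hmp x)).trans <|
      (hmp x).quasiMeasurePreserving.ae_eq_comp hg.coeFn_toLp
  have htendsto : Tendsto translate (𝓝 0) (𝓝 (translate 0)) :=
    tendsto_const_nhds.compMeasurePreservingLp (hshift.tendsto 0) hmp (hmp 0) hp
  have hdist (x : G) :
      edist (translate x) (translate 0) = eLpNorm (fun t => g (t - x) - g t) p μ := by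
    rw [Lp.edist_def]
    refine eLpNorm_congr_ae ?_
    filter_upwards [hcoe x, hcoe 0] with t hx h0
    rw [Pi.sub_apply, hx, h0, sub_zero]
  rw [← edist_self (translate 0)]
  exact (htendsto.edist tendsto_const_nhds).congr hdist

theorem lintegral_ofReal_pow_three_le_liminf_of_le {M : ℝ} (hg : Integrable g μ)
    (hg0 : ∀ t, 0 ≤ g t) (hgM : ∀ t, g t ≤ M) :
    ∫⁻ t, ENNReal.ofReal (g t ^ 3) ∂μ ≤
      liminf (fun p : G × G => tripleCorrelation μ g p.1 p.2) (𝓝 (0, 0)) := by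
  set E : G × G → ℝ≥0∞ := fun p => ENNReal.ofReal (M ^ 2) *
    (eLpNorm (fun t => g (t - p.1) - g t) 1 μ + eLpNorm (fun t => g (t - p.2) - g t) 1 μ)
  have hT := tendsto_eLpNorm_comp_sub_sub_self ENNReal.one_ne_top (memLp_one_iff_integrable.2 hg)
  have hE : Tendsto E (𝓝 (0, 0)) (𝓝 0) := by
    simpa using ENNReal.Tendsto.const_mul ((hT.comp tendsto_id.fst_nhds).add
      (hT.comp tendsto_id.snd_nhds)) (Or.inr ENNReal.ofReal_ne_top)
  rw [← ENNReal.liminf_add_of_right_tendsto_zero hE]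
  exact le_liminf_of_le (by isBoundedDefault) (.of_forall fun p =>
    lintegral_ofReal_pow_three_le_tripleCorrelation_add hg.aemeasurable hg0 hgM p.1 p.2)

theorem lintegral_ofReal_pow_three_le_liminf_tripleCorrelation (hf : Integrable f μ)
    (hf0 : ∀ t, 0 ≤ f t) :
    ∫⁻ t, ENNReal.ofReal (f t ^ 3) ∂μ ≤
      liminf (fun p : G × G => tripleCorrelation μ f p.1 p.2) (𝓝 (0, 0)) := by
  rw [lintegral_ofReal_pow_eq_iSup_min hf.aemeasurable hf0]
  refine iSup_le fun n => ?_
  have hmin0 (t : G) : 0 ≤ min (f t) n := le_min (hf0 t) n.cast_nonneg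
  have hmin : Integrable (fun t => min (f t) n) μ :=
    hf.mono (hf.aemeasurable.min aemeasurable_const).aestronglyMeasurable <| ae_of_all _ fun t => by
      rw [Real.norm_of_nonneg (hmin0 t), Real.norm_of_nonneg (hf0 t)]
      exact min_le_left _ _
  calc ∫⁻ t, ENNReal.ofReal (min (f t) n ^ 3) ∂μ
      ≤ liminf (fun p : G × G => tripleCorrelation μ (fun t => min (f t) n) p.1 p.2)
          (𝓝 (0, 0)) :=
        lintegral_ofReal_pow_three_le_liminf_of_le hmin hmin0 fun t => min_le_right _ _
    _ ≤ _ := liminf_le_liminf (.of_forall fun p =>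
        tripleCorrelation_mono hmin0 (fun t => min_le_left _ _) p.1 p.2)

end LowerBound

/-- for nonnegative integrable `f` on `ℝ`, with
`N_f(x,y) = ∫ f(t) f(t−x) f(t−y) dt ∈ [0,∞]`, one has `N_f(x,y) ≤ ∫ f³`,
`liminf_{(x,y)→(0,0)} N_f(x,y) ≥ ∫ f³`, and hence
`N_f(x,y) → ∫ f³` as `(x,y) → (0,0)` (both sides possibly `+∞`). -/
theorem kdeck_continuous_at_zero (f : ℝ → ℝ) (hf : Integrable f)
    (hf0 : ∀ t, 0 ≤ f t) :
    (∀ x y : ℝ,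
      (∫⁻ t : ℝ, ENNReal.ofReal (f t * f (t - x) * f (t - y))) ≤
        ∫⁻ t : ℝ, ENNReal.ofReal (f t ^ 3)) ∧
    (∫⁻ t : ℝ, ENNReal.ofReal (f t ^ 3)) ≤
      liminf (fun p : ℝ × ℝ =>
        ∫⁻ t : ℝ, ENNReal.ofReal (f t * f (t - p.1) * f (t - p.2)))
        (𝓝 (0, 0)) ∧
    Tendsto (fun p : ℝ × ℝ =>
        ∫⁻ t : ℝ, ENNReal.ofReal (f t * f (t - p.1) * f (t - p.2)))
      (𝓝 (0, 0)) (𝓝 (∫⁻ t : ℝ, ENNReal.ofReal (f t ^ 3))) := by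
  have hle : ∀ x y, tripleCorrelation volume f x y ≤ ∫⁻ t, ENNReal.ofReal (f t ^ 3) :=
    tripleCorrelation_le_lintegral_ofReal_pow_three hf.aemeasurable hf0
  have hliminf := lintegral_ofReal_pow_three_le_liminf_tripleCorrelation hf hf0
  exact ⟨hle, hliminf, tendsto_of_le_liminf_of_limsup_le hliminf
    (limsup_le_of_le (by isBoundedDefault) (.of_forall fun p => hle p.1 p.2))⟩
end
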